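/- Let v : ∂⁺B₁ → ℝ^d be absolutely continuous on the upper unit half-circle ∂⁺B₁ = {(cos θ, sin θ) : θ ∈ [0, π]} with v(1,0) ∈ N and v(-1,0) ∈ N, where N ⊂ ℝ^d is a compact set. Then for every x ∈ ∂⁺B₁, d_N(v(x))² ≤ (∫_{∂⁺B₁} y^a |∂_τ v|² dH¹)^{1/2} · (∫_{∂⁺B₁} y^{-a} d_N(v)² dH¹)^{1/2}, where a ∈ (0,1), y denotes the second coordinate, and ∂_τ is the tangential derivative. -/

import Mathlib

/-!
Write `g = d_N ∘ v`. Since `d_N` is 1-Lipschitz, `|g y - g x| ≤ |∫ₓʸ |v'||`, so `g` is absolutely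
continuous with `|g'| ≤ |v'|` a.e. As `g` vanishes at both ends, the fundamental theorem of
calculus for `g²` on `[0, θ₀]` and on `[θ₀, π]` gives
`2 g(θ₀)² ≤ ∫₀^θ₀ 2 |v'| g + ∫_θ₀^π 2 |v'| g`. Finally the weighted Cauchy–Schwarz inequality,
obtained by integrating `2 f g ≤ t ρ f² + (t ρ)⁻¹ g²` and optimizing over `t > 0`, splits
`∫ |v'| g` with the weights `sin^a` and `sin^(-a)`.
-/

open MeasureTheory Set Filter Topology

theorem AbsolutelyContinuousOnInterval.of_dist_le_dist {X Y : Type*} [PseudoMetricSpace X]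
    [PseudoMetricSpace Y] {f : ℝ → X} {W : ℝ → Y} {a b : ℝ}
    (hW : AbsolutelyContinuousOnInterval W a b)
    (h : ∀ x ∈ uIcc a b, ∀ y ∈ uIcc a b, dist (f x) (f y) ≤ dist (W x) (W y)) :
    AbsolutelyContinuousOnInterval f a b := by
  rw [absolutelyContinuousOnInterval_iff] at hW ⊢
  intro ε hε
  obtain ⟨δ, hδ, hWδ⟩ := hW ε hε
  refine ⟨δ, hδ, fun E hE hlen => (Finset.sum_le_sum fun i hi => ?_).trans_lt (hWδ E hE hlen)⟩
  exact h _ (hE.1 i hi).1 _ (hE.1 i hi).2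

theorem HasDerivAt.norm_le_of_dist_le_dist {E F : Type*} [NormedAddCommGroup E] [NormedSpace ℝ E]
    [NormedAddCommGroup F] [NormedSpace ℝ F] {f : ℝ → E} {W : ℝ → F} {f' : E} {w : F} {x : ℝ}
    (hf : HasDerivAt f f' x) (hW : HasDerivAt W w x)
    (h : ∀ᶠ y in 𝓝 x, dist (f y) (f x) ≤ dist (W y) (W x)) : ‖f'‖ ≤ ‖w‖ := by
  refine le_of_tendsto_of_tendsto (hasDerivAt_iff_tendsto_slope.1 hf).norm
    (hasDerivAt_iff_tendsto_slope.1 hW).norm ?_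
  filter_upwards [nhdsWithin_le_nhds h] with y hy
  simp only [slope_def_module, norm_smul, ← dist_eq_norm]
  gcongr

section IntervalDomination

variable {w : ℝ → ℝ} {a b : ℝ}

theorem dist_integral_left_eq_abs_integral (hw : IntervalIntegrable w volume a b) {x y : ℝ}
    (hx : x ∈ uIcc a b) (hy : y ∈ uIcc a b) :
    dist (∫ t in a..x, w t) (∫ t in a..y, w t) = |∫ t in x..y, w t| := by
  rw [Real.dist_eq, intervalIntegral.integral_interval_sub_left
    (hw.mono_set (uIcc_subset_uIcc left_mem_uIcc hx))
    (hw.mono_set (uIcc_subset_uIcc left_mem_uIcc hy)), intervalIntegral.integral_symm, abs_neg]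

theorem AbsolutelyContinuousOnInterval.of_dist_le_abs_integral {X : Type*} [PseudoMetricSpace X]
    {g : ℝ → X} (hw : IntervalIntegrable w volume a b)
    (hg : ∀ x ∈ uIcc a b, ∀ y ∈ uIcc a b, dist (g x) (g y) ≤ |∫ t in x..y, w t|) :
    AbsolutelyContinuousOnInterval g a b :=
  (hw.absolutelyContinuousOnInterval_intervalIntegral left_mem_uIcc).of_dist_le_dist
    fun x hx y hy => (hg x hx y hy).trans_eq (dist_integral_left_eq_abs_integral hw hx hy).symm

theorem abs_sq_sub_sq_le_integral_of_dist_le {g : ℝ → ℝ} (hab : a ≤ b)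
    (hw : IntervalIntegrable w volume a b)
    (hg : ∀ x ∈ uIcc a b, ∀ y ∈ uIcc a b, dist (g x) (g y) ≤ |∫ t in x..y, w t|) :
    |g b ^ 2 - g a ^ 2| ≤ 2 * ∫ t in a..b, |w t| * |g t| := by
  have hgac := AbsolutelyContinuousOnInterval.of_dist_le_abs_integral hw hg
  have hderiv : ∀ᵐ t, t ∈ Ioc a b → ‖deriv (g * g) t‖ ≤ 2 * (|w t| * |g t|) := by
    have hne : ∀ᵐ t, t ≠ b := by simp [ae_iff, measure_singleton]
    filter_upwards [hgac.ae_differentiableAt, hw.ae_hasDerivAt_integral, hne]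
      with t hgt hWt htb ht
    have htIoo : t ∈ Ioo a b := ⟨ht.1, lt_of_le_of_ne ht.2 htb⟩
    have htmem : t ∈ uIcc a b := uIcc_of_le hab ▸ Ioo_subset_Icc_self htIoo
    have hgd := (hgt htmem).hasDerivAt
    have hg' : |deriv g t| ≤ |w t| := by
      refine hgd.norm_le_of_dist_le_dist (hWt htmem a left_mem_uIcc) ?_
      filter_upwards [Ioo_mem_nhds htIoo.1 htIoo.2] with y hy
      have hymem : y ∈ uIcc a b := uIcc_of_le hab ▸ Ioo_subset_Icc_self hy
      exact (hg y hymem t htmem).trans_eq (dist_integral_left_eq_abs_integral hw hymem htmem).symm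
    rw [(hgd.mul hgd).deriv, Real.norm_eq_abs]
    calc |deriv g t * g t + g t * deriv g t| = 2 * (|deriv g t| * |g t|) := by
          rw [mul_comm (g t), ← two_mul, abs_mul, abs_mul, abs_two]
      _ ≤ 2 * (|w t| * |g t|) := by gcongr
  have hbound : IntervalIntegrable (fun t => |w t| * |g t|) volume a b :=
    hw.abs.mul_continuousOn hgac.continuousOn.abs
  calc |g b ^ 2 - g a ^ 2| = ‖∫ t in a..b, deriv (g * g) t‖ := by
        rw [(hgac.mul hgac).integral_deriv_eq_sub, Real.norm_eq_abs, Pi.mul_apply, Pi.mul_apply,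
          sq, sq]
    _ ≤ ∫ t in a..b, 2 * (|w t| * |g t|) :=
        intervalIntegral.norm_integral_le_of_norm_le hab hderiv (hbound.const_mul 2)
    _ = 2 * ∫ t in a..b, |w t| * |g t| := intervalIntegral.integral_const_mul _ _

theorem sq_le_integral_of_dist_le_of_eq_zero {g : ℝ → ℝ} {c : ℝ} (hc : c ∈ Icc a b)
    (hw : IntervalIntegrable w volume a b)
    (hg : ∀ x ∈ uIcc a b, ∀ y ∈ uIcc a b, dist (g x) (g y) ≤ |∫ t in x..y, w t|)
    (ha : g a = 0) (hb : g b = 0) :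
    g c ^ 2 ≤ ∫ t in a..b, |w t| * |g t| := by
  have hac : uIcc a c ⊆ uIcc a b := uIcc_subset_uIcc left_mem_uIcc (Icc_subset_uIcc hc)
  have hcb : uIcc c b ⊆ uIcc a b := uIcc_subset_uIcc (Icc_subset_uIcc hc) right_mem_uIcc
  have hleft := abs_sq_sub_sq_le_integral_of_dist_le hc.1 (hw.mono_set hac)
    fun x hx y hy => hg x (hac hx) y (hac hy)
  have hright := abs_sq_sub_sq_le_integral_of_dist_le hc.2 (hw.mono_set hcb)
    fun x hx y hy => hg x (hcb hx) y (hcb hy)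
  have hint : IntervalIntegrable (fun t => |w t| * |g t|) volume a b :=
    hw.abs.mul_continuousOn
      (AbsolutelyContinuousOnInterval.of_dist_le_abs_integral hw hg).continuousOn.abs
  rw [← intervalIntegral.integral_add_adjacent_intervals (hint.mono_set hac) (hint.mono_set hcb)]
  have hsum : 2 * g c ^ 2 = |g c ^ 2 - g a ^ 2| + |g b ^ 2 - g c ^ 2| := by
    rw [ha, hb, zero_pow two_ne_zero, sub_zero, zero_sub, abs_neg, abs_sq]
    ring
  linarith

theorem dist_le_abs_integral_norm_of_eq_add_integral {E : Type*} [NormedAddCommGroup E]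
    [NormedSpace ℝ E] {v v' : ℝ → E} (hv' : IntervalIntegrable v' volume a b)
    (hv : ∀ x ∈ uIcc a b, v x = v a + ∫ t in a..x, v' t) {x y : ℝ} (hx : x ∈ uIcc a b)
    (hy : y ∈ uIcc a b) : dist (v x) (v y) ≤ |∫ t in x..y, ‖v' t‖| := by
  rw [dist_eq_norm, hv x hx, hv y hy, add_sub_add_left_eq_sub,
    intervalIntegral.integral_interval_sub_left
      (hv'.mono_set (uIcc_subset_uIcc left_mem_uIcc hx))
      (hv'.mono_set (uIcc_subset_uIcc left_mem_uIcc hy)), intervalIntegral.integral_symm,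
    norm_neg]
  exact intervalIntegral.norm_integral_le_abs_integral_norm

end IntervalDomination

theorem le_sqrt_mul_sqrt_of_forall_two_mul_le {P X Y : ℝ} (hX : 0 ≤ X) (hY : 0 ≤ Y)
    (h : ∀ t > 0, 2 * P ≤ t * X + t⁻¹ * Y) : P ≤ √X * √Y := by
  rcases le_or_gt P 0 with hP | hP
  · exact hP.trans (by positivity)
  have hquad : ∀ t : ℝ, 0 ≤ X * (t * t) + (-(2 * P)) * t + Y := by
    intro t
    rcases le_or_gt t 0 with ht | ht
    · nlinarith [mul_nonneg hX (mul_self_nonneg t)]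
    · have := mul_le_mul_of_nonneg_left (h t ht) ht.le
      rw [mul_add, ← mul_assoc, mul_inv_cancel_left₀ ht.ne'] at this
      nlinarith
  have hdisc := discrim_le_zero hquad
  rw [discrim] at hdisc
  rw [← Real.sqrt_mul hX]
  exact Real.le_sqrt_of_sq_le (by nlinarith)

theorem integral_mul_le_sqrt_mul_sqrt {α : Type*} [MeasurableSpace α] {μ : Measure α}
    {ρ σ f g : α → ℝ} (hρσ : ∀ᵐ x ∂μ, 0 < ρ x ∧ σ x = (ρ x)⁻¹)
    (hfg : Integrable (fun x => f x * g x) μ) (hf : Integrable (fun x => ρ x * f x ^ 2) μ)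
    (hg : Integrable (fun x => σ x * g x ^ 2) μ) :
    ∫ x, f x * g x ∂μ ≤ √(∫ x, ρ x * f x ^ 2 ∂μ) * √(∫ x, σ x * g x ^ 2 ∂μ) := by
  have hσ : 0 ≤ᵐ[μ] fun x => σ x * g x ^ 2 := by
    filter_upwards [hρσ] with x ⟨hρ, hσ⟩
    rw [hσ]
    positivity
  have hρ : 0 ≤ᵐ[μ] fun x => ρ x * f x ^ 2 := by
    filter_upwards [hρσ] with x hx
    exact mul_nonneg hx.1.le (sq_nonneg _)
  refine le_sqrt_mul_sqrt_of_forall_two_mul_le (integral_nonneg_of_ae hρ)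
    (integral_nonneg_of_ae hσ) fun t ht => ?_
  have hpt : ∀ᵐ x ∂μ, 2 * (f x * g x) ≤ t * (ρ x * f x ^ 2) + t⁻¹ * (σ x * g x ^ 2) := by
    filter_upwards [hρσ] with x ⟨hρ, hσ⟩
    rw [hσ, ← sub_nonneg]
    have key : t * (ρ x * f x ^ 2) + t⁻¹ * ((ρ x)⁻¹ * g x ^ 2) - 2 * (f x * g x)
        = (t * ρ x * f x - g x) ^ 2 * (t * ρ x)⁻¹ := by
      field_simp
      ring
    rw [key]
    positivity
  calc 2 * ∫ x, f x * g x ∂μ = ∫ x, 2 * (f x * g x) ∂μ := (integral_const_mul _ _).symm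
    _ ≤ ∫ x, t * (ρ x * f x ^ 2) + t⁻¹ * (σ x * g x ^ 2) ∂μ :=
        integral_mono_ae (hfg.const_mul 2) ((hf.const_mul t).add (hg.const_mul t⁻¹)) hpt
    _ = t * ∫ x, ρ x * f x ^ 2 ∂μ + t⁻¹ * ∫ x, σ x * g x ^ 2 ∂μ := by
        rw [integral_add (hf.const_mul t) (hg.const_mul t⁻¹), integral_const_mul,
          integral_const_mul]

theorem dist_sq_on_half_circle_general {d : ℕ} (N : Set (EuclideanSpace ℝ (Fin d)))
    (a : ℝ)
    (v v' : ℝ → EuclideanSpace ℝ (Fin d))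
    (hint : IntervalIntegrable v' volume 0 Real.pi)
    (hAC : ∀ θ ∈ Set.Icc (0 : ℝ) Real.pi, v θ = v 0 + ∫ t in (0:ℝ)..θ, v' t)
    (h0 : v 0 ∈ N) (hπ : v Real.pi ∈ N)
    (hI1 : IntervalIntegrable (fun θ => (Real.sin θ) ^ a * ‖v' θ‖ ^ 2) volume 0 Real.pi)
    (hI2 : IntervalIntegrable
      (fun θ => (Real.sin θ) ^ (-a) * (Metric.infDist (v θ) N) ^ 2) volume 0 Real.pi) :
    ∀ θ₀ ∈ Set.Icc (0 : ℝ) Real.pi,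
      (Metric.infDist (v θ₀) N) ^ 2 ≤
        Real.sqrt (∫ θ in (0:ℝ)..Real.pi, (Real.sin θ) ^ a * ‖v' θ‖ ^ 2) *
        Real.sqrt (∫ θ in (0:ℝ)..Real.pi,
          (Real.sin θ) ^ (-a) * (Metric.infDist (v θ) N) ^ 2) := by
  intro θ₀ hθ₀
  have hπ0 : 0 ≤ Real.pi := Real.pi_pos.le
  have hg : ∀ x ∈ uIcc 0 Real.pi, ∀ y ∈ uIcc 0 Real.pi,
      dist (Metric.infDist (v x) N) (Metric.infDist (v y) N) ≤ |∫ t in x..y, ‖v' t‖| :=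
    fun x hx y hy => ((Metric.lipschitz_infDist_pt N).dist_le_mul _ _).trans <| by
      simpa using dist_le_abs_integral_norm_of_eq_add_integral hint
        (uIcc_of_le hπ0 ▸ hAC) hx hy
  have hD := sq_le_integral_of_dist_le_of_eq_zero hθ₀ hint.norm hg
    (Metric.infDist_zero_of_mem h0) (Metric.infDist_zero_of_mem hπ)
  simp only [abs_norm, abs_of_nonneg Metric.infDist_nonneg] at hD
  have hweight : ∀ᵐ θ ∂volume.restrict (Ioc 0 Real.pi),
      0 < Real.sin θ ^ a ∧ Real.sin θ ^ (-a) = (Real.sin θ ^ a)⁻¹ := by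
    rw [Measure.restrict_congr_set Ioo_ae_eq_Ioc.symm]
    filter_upwards [ae_restrict_mem measurableSet_Ioo] with θ hθ
    have hsin := Real.sin_pos_of_pos_of_lt_pi hθ.1 hθ.2
    exact ⟨Real.rpow_pos_of_pos hsin a, Real.rpow_neg hsin.le a⟩
  have hprod : IntervalIntegrable (fun θ => ‖v' θ‖ * Metric.infDist (v θ) N) volume 0 Real.pi :=
    hint.norm.mul_continuousOn
      (AbsolutelyContinuousOnInterval.of_dist_le_abs_integral hint.norm hg).continuousOn
  refine hD.trans ?_
  simp only [intervalIntegral.integral_of_le hπ0]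
  exact integral_mul_le_sqrt_mul_sqrt hweight hprod.1 hI1.1 hI2.1

theorem dist_sq_on_half_circle {d : ℕ} (N : Set (EuclideanSpace ℝ (Fin d)))
    (hNc : IsCompact N) (hNne : N.Nonempty)
    (a : ℝ) (ha : a ∈ Set.Ioo (0 : ℝ) 1)
    (v v' : ℝ → EuclideanSpace ℝ (Fin d))
    (hint : IntervalIntegrable v' volume 0 Real.pi)
    (hAC : ∀ θ ∈ Set.Icc (0 : ℝ) Real.pi, v θ = v 0 + ∫ t in (0:ℝ)..θ, v' t)
    (h0 : v 0 ∈ N) (hπ : v Real.pi ∈ N)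
    (hI1 : IntervalIntegrable (fun θ => (Real.sin θ) ^ a * ‖v' θ‖ ^ 2) volume 0 Real.pi)
    (hI2 : IntervalIntegrable
      (fun θ => (Real.sin θ) ^ (-a) * (Metric.infDist (v θ) N) ^ 2) volume 0 Real.pi) :
    ∀ θ₀ ∈ Set.Icc (0 : ℝ) Real.pi,
      (Metric.infDist (v θ₀) N) ^ 2 ≤
        Real.sqrt (∫ θ in (0:ℝ)..Real.pi, (Real.sin θ) ^ a * ‖v' θ‖ ^ 2) *
        Real.sqrt (∫ θ in (0:ℝ)..Real.pi,
          (Real.sin θ) ^ (-a) * (Metric.infDist (v θ) N) ^ 2) :=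
  dist_sq_on_half_circle_general N a v v' hint hAC h0 hπ hI1 hI2
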